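/- Let R be a Noetherian ring and suppose Λ(R) = Λ'(R), where Λ(R) = {P ∈ Spec R : |R/P|_r = |R|_r} and Λ'(R) = {Q ∈ Spec R : |R/Q|_l = |R|_l}. Then for any two-sided ideal J of R: |R/J|_r < |R|_r if and only if |R/J|_l < |R|_l. -/

import Mathlib

universe u

/-- `DevLE α o`: the Gabriel–Rentschler deviation of the preorder `α` is at most `o`. -/
def DevLE (α : Type u) [Preorder α] (o : Ordinal.{u}) : Prop :=
  ∀ f : ℕ → α, (∀ n, f (n + 1) ≤ f n) →
    ∃ N : ℕ, ∀ n, N ≤ n →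
      f n ≤ f (n + 1) ∨
        ∃ o' : {x : Ordinal.{u} // x < o},
          DevLE {y : α // f (n + 1) ≤ y ∧ y ≤ f n} o'.1
termination_by o
decreasing_by exact o'.2

/-- The deviation (Krull dimension) of a preorder, as the least ordinal bound. -/
noncomputable def dev (α : Type u) [Preorder α] : Ordinal.{u} := sInf {o | DevLE α o}

/-- The left Krull dimension of a ring: deviation of the lattice of left ideals. -/
noncomputable def lKdim (R : Type u) [Ring R] : Ordinal.{u} := dev (Submodule R R)

/-- The right Krull dimension of a ring: deviation of the lattice of right ideals. -/
noncomputable def rKdim (R : Type u) [Ring R] : Ordinal.{u} := dev (Submodule Rᵐᵒᵖ R)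

/-- Krull dimension of a right ideal `J` as a right module: deviation of `[⊥, J]`. -/
noncomputable def rIdealDim (R : Type u) [Ring R] (J : Submodule Rᵐᵒᵖ R) : Ordinal.{u} :=
  dev {I : Submodule Rᵐᵒᵖ R // I ≤ J}

/-- Krull dimension of a left ideal `J` as a left module. -/
noncomputable def lIdealDim (R : Type u) [Ring R] (J : Submodule R R) : Ordinal.{u} :=
  dev {I : Submodule R R // I ≤ J}

/-- A ring is right Krull homogeneous if every nonzero right ideal has full dimension. -/
def RightKH (R : Type u) [Ring R] : Prop :=
  ∀ J : Submodule Rᵐᵒᵖ R, J ≠ ⊥ → rIdealDim R J = rKdim R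

def LeftKH (R : Type u) [Ring R] : Prop :=
  ∀ J : Submodule R R, J ≠ ⊥ → lIdealDim R J = lKdim R

/-- A two-sided ideal is prime if it is proper and `aRb ⊆ P` implies `a ∈ P` or `b ∈ P`. -/
def IsPrimeT {R : Type u} [Ring R] (P : TwoSidedIdeal R) : Prop :=
  (P : Set R) ≠ Set.univ ∧ ∀ a b : R, (∀ r : R, a * r * b ∈ P) → a ∈ P ∨ b ∈ P

/-- Right Krull dimension of the quotient ring `R/I`. -/
noncomputable def rKdimQ {R : Type u} [Ring R] (I : TwoSidedIdeal R) : Ordinal.{u} :=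
  rKdim I.ringCon.Quotient

noncomputable def lKdimQ {R : Type u} [Ring R] (I : TwoSidedIdeal R) : Ordinal.{u} :=
  lKdim I.ringCon.Quotient

/-- `Λ(R)`: primes with full right Krull dimension. -/
def Lam (R : Type u) [Ring R] : Set (TwoSidedIdeal R) :=
  {P | IsPrimeT P ∧ rKdimQ P = rKdim R}

/-- `Λ'(R)`: primes with full left Krull dimension. -/
def Lam' (R : Type u) [Ring R] : Set (TwoSidedIdeal R) :=
  {P | IsPrimeT P ∧ lKdimQ P = lKdim R}

/-- A two-sided ideal viewed as a right ideal. -/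
def rightIdealOf {R : Type u} [Ring R] (I : TwoSidedIdeal R) : Submodule Rᵐᵒᵖ R where
  carrier := I
  zero_mem' := I.zero_mem
  add_mem' := I.add_mem
  smul_mem' := fun r x hx => I.mul_mem_right x r.unop hx

/-- A two-sided ideal viewed as a left ideal. -/
def leftIdealOf {R : Type u} [Ring R] (I : TwoSidedIdeal R) : Submodule R R where
  carrier := I
  zero_mem' := I.zero_mem
  add_mem' := I.add_mem
  smul_mem' := fun r x hx => I.mul_mem_left r x hx

/-- The right annihilator of a set, as a right ideal. -/
def rAnnIdeal (R : Type u) [Ring R] (S : Set R) : Submodule Rᵐᵒᵖ R where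
  carrier := {x | ∀ y ∈ S, y * x = 0}
  zero_mem' := by intro y _; simp
  add_mem' := by intro a b ha hb y hy; rw [mul_add, ha y hy, hb y hy, add_zero]
  smul_mem' := by
    intro r x hx y hy
    show y * (x * r.unop) = 0
    rw [← mul_assoc, hx y hy, zero_mul]

/-- The left annihilator of a set. -/
def lAnnSet (R : Type u) [Ring R] (S : Set R) : Set R := {x | ∀ y ∈ S, x * y = 0}

/-! If `|R/J|_l = |R|_l`, a two-sided ideal `P ⊇ J` maximal with `|R/P|_l = |R|_l` is prime:
otherwise there are ideals `X, Y ⊋ P` with `XY ⊆ P`, and as `Y/P` is a finitely generated left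
`R/X`-module, `|R/P|_l ≤ max(|R/X|_l, |R/Y|_l) < |R|_l`. Hence `P ∈ Λ' = Λ`, and
`|R/J|_r ≥ |R/P|_r = |R|_r`. The same argument in `Rᵐᵒᵖ` gives the converse.
It breaks down only when `|R|_l = 0` (then `P` may be `R`): there a maximal ideal `M` lies in
`Λ' = Λ`, and `R/M` is simple and left Artinian, hence semisimple (Wedderburn–Artin) and so right
Artinian, giving `|R|_r = |R/M|_r = 0`. -/

open Set

section Deviation

variable {α β : Type u}

theorem DevLE.mono [Preorder α] {o o' : Ordinal.{u}} (h : DevLE α o) (hoo' : o ≤ o') :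
    DevLE α o' := by
  rw [DevLE] at h ⊢
  intro f hf
  obtain ⟨N, hN⟩ := h f hf
  exact ⟨N, fun n hn => (hN n hn).imp_right fun ⟨o₀, hd⟩ => ⟨⟨o₀, o₀.2.trans_le hoo'⟩, hd⟩⟩

theorem DevLE.of_forall_le [Preorder α] (h : ∀ x y : α, x ≤ y) (o : Ordinal.{u}) : DevLE α o := by
  rw [DevLE]
  exact fun f _ => ⟨0, fun n _ => Or.inl (h _ _)⟩

theorem DevLE.of_strictMono [PartialOrder α] [PartialOrder β] {o : Ordinal.{u}} {e : α → β}
    (he : StrictMono e) (h : DevLE β o) : DevLE α o := by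
  induction o using WellFoundedLT.induction generalizing α β with
  | _ o IH =>
  rw [DevLE] at h ⊢
  intro f hf
  obtain ⟨N, hN⟩ := h (e ∘ f) fun n => he.monotone (hf n)
  refine ⟨N, fun n hn => (hN n hn).imp (fun hle => ?_) fun ⟨o', hd⟩ => ⟨o', ?_⟩⟩
  · rcases (hf n).lt_or_eq with hlt | heq
    · exact absurd hle (he hlt).not_ge
    · exact heq.ge
  · exact IH o'.1 o'.2 (e := fun y => ⟨e y.1, he.monotone y.2.1, he.monotone y.2.2⟩)
      (fun _ _ hxy => he hxy) hd

theorem dev_le_of_devLE [Preorder α] {o : Ordinal.{u}} (h : DevLE α o) : dev α ≤ o :=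
  csInf_le' h

theorem devLE_dev [Preorder α] (h : ∃ o, DevLE α o) : DevLE α (dev α) :=
  csInf_mem h

theorem dev_le_dev_of_strictMono [PartialOrder α] [PartialOrder β] {e : α → β}
    (he : StrictMono e) (h : ∃ o, DevLE β o) : dev α ≤ dev β :=
  dev_le_of_devLE ((devLE_dev h).of_strictMono he)

theorem OrderIso.dev_eq [PartialOrder α] [PartialOrder β] (e : α ≃o β) : dev α = dev β := by
  unfold dev
  congr 1
  ext o
  exact ⟨fun h => h.of_strictMono e.symm.strictMono, fun h => h.of_strictMono e.strictMono⟩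

theorem dev_eq_zero_of_subsingleton [Preorder α] [Subsingleton α] : dev α = 0 :=
  nonpos_iff_eq_zero.1 <| dev_le_of_devLE <|
    DevLE.of_forall_le (fun x y => (Subsingleton.elim x y).le) 0

theorem devLE_zero_iff [PartialOrder α] : DevLE α 0 ↔ WellFoundedLT α := by
  rw [DevLE]
  constructor
  · intro h
    refine ⟨RelEmbedding.wellFounded_iff_isEmpty.2 ⟨fun g => ?_⟩⟩
    have hg : ∀ n, g (n + 1) < g n := fun n => g.map_rel_iff.2 n.lt_succ_self
    obtain ⟨N, hN⟩ := h (fun n => g n) fun n => (hg n).le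
    rcases hN N le_rfl with hle | ⟨⟨o, ho⟩, _⟩
    · exact (hg N).not_ge hle
    · exact not_lt_zero ho
  · intro _ f hf
    obtain ⟨_, ⟨N, rfl⟩, hmin⟩ := wellFounded_lt.has_min (Set.range f) ⟨f 0, 0, rfl⟩
    have hanti : Antitone f := antitone_nat_of_succ_le hf
    have hconst : ∀ n, N ≤ n → f n = f N := fun n hn =>
      (hanti hn).lt_or_eq.resolve_left (hmin _ ⟨n, rfl⟩)
    exact ⟨N, fun n hn => Or.inl ((hconst n hn).trans (hconst _ (hn.trans n.le_succ)).symm).le⟩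

theorem DevLE.prod [PartialOrder α] [PartialOrder β] {o : Ordinal.{u}} (hα : DevLE α o)
    (hβ : DevLE β o) : DevLE (α × β) o := by
  induction o using WellFoundedLT.induction generalizing α β with
  | _ o IH =>
  rw [DevLE] at hα hβ ⊢
  intro f hf
  obtain ⟨N₁, h₁⟩ := hα (fun n => (f n).1) fun n => (hf n).1
  obtain ⟨N₂, h₂⟩ := hβ (fun n => (f n).2) fun n => (hf n).2
  refine ⟨max N₁ N₂, fun n hn => ?_⟩
  -- the interval of the product embeds into the product of the coordinate intervals
  have step : ∀ o' < o, DevLE {y : α // (f (n + 1)).1 ≤ y ∧ y ≤ (f n).1} o' →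
      DevLE {y : β // (f (n + 1)).2 ≤ y ∧ y ≤ (f n).2} o' →
      ∃ o' : {x : Ordinal.{u} // x < o},
        DevLE {y : α × β // f (n + 1) ≤ y ∧ y ≤ f n} o'.1 := fun o' ho' d₁ d₂ =>
    ⟨⟨o', ho'⟩, (IH o' ho' d₁ d₂).of_strictMono
      (e := fun y => (⟨y.1.1, y.2.1.1, y.2.2.1⟩, ⟨y.1.2, y.2.1.2, y.2.2.2⟩))
      fun _ _ hxy => hxy⟩
  have hpoint : ∀ {γ : Type u} [PartialOrder γ] {a b : γ}, b ≤ a →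
      ∀ o', DevLE {y : γ // a ≤ y ∧ y ≤ b} o' := fun hba =>
    DevLE.of_forall_le fun x y => x.2.2.trans (hba.trans y.2.1)
  rcases h₁ n (le_of_max_le_left hn) with t₁ | ⟨⟨o₁, ho₁⟩, d₁⟩ <;>
    rcases h₂ n (le_of_max_le_right hn) with t₂ | ⟨⟨o₂, ho₂⟩, d₂⟩
  · exact Or.inl ⟨t₁, t₂⟩
  · exact Or.inr (step o₂ ho₂ (hpoint t₁ o₂) d₂)
  · exact Or.inr (step o₁ ho₁ d₁ (hpoint t₂ o₁))
  · exact Or.inr (step _ (max_lt ho₁ ho₂) (d₁.mono (le_max_left _ _)) (d₂.mono (le_max_right _ _)))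

theorem exists_devLE_Ici [PartialOrder α] [WellFoundedGT α] (a : α) : ∃ o, DevLE (Ici a) o := by
  induction a using WellFoundedGT.induction with
  | _ a IH =>
  choose! d hd using IH
  refine ⟨⨆ b : Ioi a, Order.succ (d b), ?_⟩
  rw [DevLE]
  intro f hf
  by_cases hbot : ∃ m, (f m).1 = a
  · obtain ⟨m, hm⟩ := hbot
    refine ⟨m, fun n hn => Or.inl ?_⟩
    have hnm : (f n).1 ≤ (f m).1 := antitone_nat_of_succ_le hf hn
    exact (hnm.trans_eq hm).trans (f (n + 1)).2
  · push Not at hbot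
    refine ⟨0, fun n _ => Or.inr ?_⟩
    have hlt : a < (f (n + 1)).1 := (f (n + 1)).2.lt_of_ne (hbot (n + 1)).symm
    exact ⟨⟨d (f (n + 1)).1, (Order.lt_succ _).trans_le
        (le_ciSup Ordinal.bddAbove_of_small (⟨_, hlt⟩ : Ioi a))⟩,
      (hd _ hlt).of_strictMono (e := fun y => ⟨y.1.1, y.2.1⟩) fun _ _ h => h⟩

theorem exists_devLE [PartialOrder α] [WellFoundedGT α] : ∃ o, DevLE α o := by
  choose d hd using exists_devLE_Ici (α := α)
  refine ⟨⨆ a : α, Order.succ (d a), ?_⟩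
  rw [DevLE]
  refine fun f _ => ⟨0, fun n _ => Or.inr ⟨⟨d (f (n + 1)), (Order.lt_succ _).trans_le
    (le_ciSup Ordinal.bddAbove_of_small _)⟩, ?_⟩⟩
  exact (hd _).of_strictMono (e := fun y => ⟨y.1, y.2.1⟩) fun _ _ h => h

theorem dev_eq_zero_iff [PartialOrder α] [WellFoundedGT α] : dev α = 0 ↔ WellFoundedLT α := by
  refine ⟨fun h => devLE_zero_iff.1 (h ▸ devLE_dev exists_devLE), fun h => ?_⟩
  exact nonpos_iff_eq_zero.1 (dev_le_of_devLE (devLE_zero_iff.2 h))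

theorem dev_Icc_mono [PartialOrder α] [WellFoundedGT α] {a b a' b' : α} (ha : a' ≤ a)
    (hb : b ≤ b') : dev (Icc a b) ≤ dev (Icc a' b') :=
  dev_le_dev_of_strictMono (e := inclusion (Icc_subset_Icc ha hb)) (fun _ _ h => h)
    exists_devLE

theorem dev_Icc_self [PartialOrder α] (a : α) : dev (Icc a a) = 0 :=
  nonpos_iff_eq_zero.1 <| dev_le_of_devLE <|
    DevLE.of_forall_le (fun x y => (x.2.2.trans y.2.1 : x.1 ≤ y.1)) 0

theorem dev_Icc_le_max [Lattice α] [IsModularLattice α] [WellFoundedGT α] {a b c : α}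
    (hac : a ≤ c) (hcb : c ≤ b) : dev (Icc a b) ≤ max (dev (Icc a c)) (dev (Icc c b)) := by
  refine dev_le_of_devLE (DevLE.of_strictMono (β := Icc a c × Icc c b)
    (e := fun x => (⟨x.1 ⊓ c, le_inf x.2.1 hac, inf_le_right⟩,
      ⟨x.1 ⊔ c, le_sup_right, sup_le x.2.2 hcb⟩)) (fun x y hxy => ?_) ?_)
  · exact strictMono_inf_prod_sup (z := c) (show x.1 < y.1 from hxy)
  · exact DevLE.prod ((devLE_dev exists_devLE).mono (le_max_left _ _))
      ((devLE_dev exists_devLE).mono (le_max_right _ _))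

end Deviation

section Module

open Submodule

variable {S M : Type u} [Ring S] [AddCommGroup M] [Module S M]

theorem le_of_comap_toSpanSingleton_le {c K K' : Submodule S M} {a : M} (hcK : c ≤ K)
    (hcK' : c ≤ K') (hK' : K' ≤ c ⊔ span S {a})
    (h : K'.comap (LinearMap.toSpanSingleton S M a) ≤ K.comap (LinearMap.toSpanSingleton S M a)) :
    K' ≤ K := by
  intro z hz
  obtain ⟨u, hu, v, hv, rfl⟩ := mem_sup.1 (hK' hz)
  obtain ⟨s, rfl⟩ := mem_span_singleton.1 hv
  have hs : s • a ∈ K' := by simpa using K'.sub_mem hz (hcK' hu)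
  exact K.add_mem (hcK hu) (h hs)

theorem dev_Icc_sup_span_singleton_le [IsNoetherianRing S] (c : Submodule S M) (a : M) :
    dev (Icc c (c ⊔ span S {a})) ≤ dev (Icc (c.comap (LinearMap.toSpanSingleton S M a)) ⊤) :=
  dev_le_dev_of_strictMono (e := fun K => ⟨K.1.comap (LinearMap.toSpanSingleton S M a),
    comap_mono K.2.1, le_top⟩) (fun K K' hKK' => lt_of_le_not_ge (comap_mono hKK'.le)
      fun h => hKK'.not_ge (le_of_comap_toSpanSingleton_le K.2.1 K'.2.1 K'.2.2 h)) exists_devLE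

theorem dev_Icc_sup_span_le [IsNoetherianRing S] [IsNoetherian S M] {c : Submodule S M}
    {D : Ideal S} {s : Finset M} (hs : ∀ a ∈ s, ∀ d ∈ D, d • a ∈ c) :
    dev (Icc c (c ⊔ span S s)) ≤ dev (Icc D ⊤) := by
  classical
  induction s using Finset.induction_on with
  | empty => rw [Finset.coe_empty, span_empty, sup_bot_eq, dev_Icc_self]; exact zero_le
  | insert a s _ IH =>
    have hc : c ≤ c ⊔ span S s := le_sup_left
    rw [Finset.coe_insert, span_insert, sup_left_comm, sup_comm (span S {a})]
    refine (dev_Icc_le_max hc le_sup_left).trans (max_le (IH fun b hb => hs b (by simp [hb])) ?_)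
    refine (dev_Icc_sup_span_singleton_le _ a).trans (dev_Icc_mono (fun d hd => ?_) le_rfl)
    exact hc (hs a (by simp) d hd)

end Module

section Ring

variable {S T : Type u} [Ring S] [Ring T]

theorem lKdim_eq_dev_Icc_of_surjective {f : S →+* T} (hf : Function.Surjective f) :
    lKdim T = dev (Icc (Ideal.comap f ⊥) ⊤) :=
  ((Ideal.relIsoOfSurjective f hf).trans
    (OrderIso.setCongr (Ici _) (Icc _ ⊤) Set.Icc_top.symm)).dev_eq

theorem comap_mk'_bot (I : TwoSidedIdeal S) : Ideal.comap I.ringCon.mk' ⊥ = I.asIdeal := by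
  ext x
  rw [Ideal.mem_comap, Ideal.mem_bot, TwoSidedIdeal.mem_asIdeal, ← TwoSidedIdeal.mem_ker,
    TwoSidedIdeal.ker_ringCon_mk']

theorem lKdimQ_eq_dev_Icc (I : TwoSidedIdeal S) : lKdimQ I = dev (Icc I.asIdeal ⊤) := by
  rw [lKdimQ, lKdim_eq_dev_Icc_of_surjective I.ringCon.mk'_surjective, comap_mk'_bot]

def opLinearEquivSelf : S ≃ₗ[Sᵐᵒᵖ] Sᵐᵒᵖ where
  toFun := MulOpposite.op
  invFun := MulOpposite.unop
  map_add' _ _ := rfl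
  map_smul' _ _ := rfl
  left_inv _ := rfl
  right_inv _ := rfl

theorem rKdim_eq_lKdim_op : rKdim S = lKdim Sᵐᵒᵖ :=
  (Submodule.orderIsoMapComap opLinearEquivSelf).dev_eq

theorem mk'_op_surjective (I : TwoSidedIdeal S) : Function.Surjective I.ringCon.mk'.op :=
  fun y => by
    obtain ⟨x, hx⟩ := I.ringCon.mk'_surjective y.unop
    exact ⟨MulOpposite.op x, congrArg MulOpposite.op hx⟩

theorem comap_mk'_op_bot (I : TwoSidedIdeal S) :
    Ideal.comap I.ringCon.mk'.op ⊥ = I.op.asIdeal := by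
  ext x
  rw [Ideal.mem_comap, Ideal.mem_bot, TwoSidedIdeal.mem_asIdeal, TwoSidedIdeal.mem_op_iff]
  change MulOpposite.op (I.ringCon.mk' x.unop) = 0 ↔ _
  rw [MulOpposite.op_eq_zero_iff, ← TwoSidedIdeal.mem_ker, TwoSidedIdeal.ker_ringCon_mk']

theorem rKdimQ_eq_lKdimQ_op (I : TwoSidedIdeal S) : rKdimQ I = lKdimQ I.op := by
  rw [rKdimQ, rKdim_eq_lKdim_op, lKdim_eq_dev_Icc_of_surjective (mk'_op_surjective I),
    comap_mk'_op_bot, lKdimQ_eq_dev_Icc]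

theorem lKdimQ_bot : lKdimQ (⊥ : TwoSidedIdeal S) = lKdim S := by
  rw [lKdimQ_eq_dev_Icc, lKdim_eq_dev_Icc_of_surjective (f := RingHom.id S) Function.surjective_id,
    Ideal.comap_id]
  rfl

theorem lKdimQ_top : lKdimQ (⊤ : TwoSidedIdeal S) = 0 := by
  rw [lKdimQ_eq_dev_Icc]
  exact dev_Icc_self _

theorem TwoSidedIdeal.asIdeal_strictMono : StrictMono (TwoSidedIdeal.asIdeal (R := S)) :=
  fun _ _ h => lt_of_le_not_ge (TwoSidedIdeal.asIdeal.monotone h.le) fun h' => h.not_ge h'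

theorem IsPrimeT.of_op {I : TwoSidedIdeal S} (h : IsPrimeT I.op) : IsPrimeT I := by
  refine ⟨fun hI => h.1 (Set.eq_univ_of_forall fun x => ?_), fun a b hab => ?_⟩
  · exact TwoSidedIdeal.mem_op_iff.2 (show x.unop ∈ (I : Set S) from hI ▸ Set.mem_univ _)
  · simpa only [TwoSidedIdeal.mem_op_iff, MulOpposite.unop_op, or_comm] using
      h.2 (MulOpposite.op b) (MulOpposite.op a) fun r =>
        TwoSidedIdeal.mem_op_iff.2 (by simpa [mul_assoc] using hab r.unop)

/-- If `x S y ⊆ P` with `x, y ∉ P`, the ideals `Y = {z | x S z ⊆ P}` and `X = {z | z Y ⊆ P}`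
strictly contain `P` and satisfy `X Y ⊆ P`. -/
theorem exists_lt_lt_mul_mem {P : TwoSidedIdeal S} {x y : S} (hxy : ∀ r, x * r * y ∈ P)
    (hx : x ∉ P) (hy : y ∉ P) :
    ∃ X Y : TwoSidedIdeal S, P < X ∧ P < Y ∧ ∀ a ∈ X, ∀ b ∈ Y, a * b ∈ P := by
  let Y : TwoSidedIdeal S := .mk' {z | ∀ r, x * r * z ∈ P}
    (fun r => by simp)
    (fun hz hw r => by simpa [mul_add] using P.add_mem (hz r) (hw r))
    (fun hz r => by simpa using P.neg_mem (hz r))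
    (fun {w z} hz r => by simpa [mul_assoc] using hz (r * w))
    (fun {z w} hz r => by simpa [mul_assoc] using P.mul_mem_right _ w (hz r))
  let X : TwoSidedIdeal S := .mk' {z | ∀ w ∈ Y, z * w ∈ P}
    (fun w _ => by simp)
    (fun hz hz' w hw => by simpa [add_mul] using P.add_mem (hz w hw) (hz' w hw))
    (fun hz w hw => by simpa using P.neg_mem (hz w hw))
    (fun {u z} hz w hw => by simpa [mul_assoc] using P.mul_mem_left u _ (hz w hw))
    (fun {z u} hz w hw => by simpa [mul_assoc] using hz _ (Y.mul_mem_left u w hw))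
  have hY : ∀ z, z ∈ Y ↔ ∀ r, x * r * z ∈ P := TwoSidedIdeal.mem_mk' _ _ _ _ _ _
  have hX : ∀ z, z ∈ X ↔ ∀ w ∈ Y, z * w ∈ P := TwoSidedIdeal.mem_mk' _ _ _ _ _ _
  refine ⟨X, Y, lt_of_le_of_ne (fun p hp => ?_) fun h => hx ?_,
    lt_of_le_of_ne (fun p hp => ?_) fun h => hy ?_, fun a ha b hb => (hX a).1 ha b hb⟩
  · exact (hX p).2 fun w _ => P.mul_mem_right p w hp
  · exact h ▸ (hX x).2 fun w hw => by simpa using (hY w).1 hw 1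
  · exact (hY p).2 fun r => P.mul_mem_left _ p hp
  · exact h ▸ (hY y).2 hxy

end Ring

section Noetherian

variable {S : Type u} [Ring S] [IsNoetherianRing S]

instance : WellFoundedGT (TwoSidedIdeal S) :=
  TwoSidedIdeal.asIdeal_strictMono.wellFoundedGT

theorem lKdimQ_anti {I J : TwoSidedIdeal S} (h : I ≤ J) : lKdimQ J ≤ lKdimQ I := by
  rw [lKdimQ_eq_dev_Icc, lKdimQ_eq_dev_Icc]
  exact dev_Icc_mono (TwoSidedIdeal.asIdeal.monotone h) le_rfl

theorem lKdimQ_le_lKdim (I : TwoSidedIdeal S) : lKdimQ I ≤ lKdim S :=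
  lKdimQ_bot (S := S) ▸ lKdimQ_anti bot_le

/-- `Y/P` is a finitely generated left module over `S/X`. -/
theorem lKdimQ_le_max_of_mul_mem {P X Y : TwoSidedIdeal S} (hPY : P ≤ Y)
    (hXY : ∀ a ∈ X, ∀ b ∈ Y, a * b ∈ P) : lKdimQ P ≤ max (lKdimQ X) (lKdimQ Y) := by
  obtain ⟨s, hs⟩ := IsNoetherian.noetherian Y.asIdeal
  have hY : P.asIdeal ⊔ Submodule.span S s = Y.asIdeal := by
    rw [hs]
    exact sup_eq_right.2 (TwoSidedIdeal.asIdeal.monotone hPY)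
  have hPY' : dev (Icc P.asIdeal Y.asIdeal) ≤ dev (Icc X.asIdeal ⊤) := by
    rw [← hY]
    exact dev_Icc_sup_span_le fun a ha d hd =>
      hXY d hd a (TwoSidedIdeal.mem_asIdeal.1 (hs ▸ Submodule.subset_span ha))
  rw [lKdimQ_eq_dev_Icc, lKdimQ_eq_dev_Icc, lKdimQ_eq_dev_Icc]
  exact (dev_Icc_le_max (TwoSidedIdeal.asIdeal.monotone hPY) le_top).trans
    (max_le_max_right _ hPY')

theorem exists_mem_Lam'_le (hS : lKdim S ≠ 0) {J : TwoSidedIdeal S}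
    (hJ : lKdimQ J = lKdim S) : ∃ P ∈ Lam' S, J ≤ P := by
  obtain ⟨P, hJP, hP, hmax⟩ := exists_maximal_ge_of_wellFoundedGT (lKdimQ · = lKdim S) J hJ
  have hlt : ∀ I, P < I → lKdimQ I < lKdim S := fun I hI =>
    (lKdimQ_le_lKdim I).lt_of_ne fun h => hI.not_ge (hmax h hI.le)
  refine ⟨P, ⟨⟨fun htop => hS ?_, fun x y hxy => ?_⟩, hP⟩, hJP⟩
  · have hPtop : P = ⊤ := eq_top_iff.2 fun x _ => show x ∈ (P : Set S) from htop ▸ Set.mem_univ x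
    rw [← hP, hPtop, lKdimQ_top]
  · by_contra! hxy'
    obtain ⟨X, Y, hPX, hPY, hXY⟩ := exists_lt_lt_mul_mem hxy hxy'.1 hxy'.2
    exact (lKdimQ_le_max_of_mul_mem hPY.le hXY).not_gt (hP ▸ max_lt (hlt X hPX) (hlt Y hPY))

end Noetherian

section Opposite

variable {S : Type u} [Ring S] [IsNoetherianRing Sᵐᵒᵖ]

theorem rKdimQ_anti {I J : TwoSidedIdeal S} (h : I ≤ J) : rKdimQ J ≤ rKdimQ I := by
  rw [rKdimQ_eq_lKdimQ_op, rKdimQ_eq_lKdimQ_op]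
  exact lKdimQ_anti (TwoSidedIdeal.opOrderIso.monotone h)

theorem rKdimQ_le_rKdim (I : TwoSidedIdeal S) : rKdimQ I ≤ rKdim S := by
  rw [rKdimQ_eq_lKdimQ_op, rKdim_eq_lKdim_op]
  exact lKdimQ_le_lKdim _

theorem exists_mem_Lam_le (hS : rKdim S ≠ 0) {J : TwoSidedIdeal S}
    (hJ : rKdimQ J = rKdim S) : ∃ P ∈ Lam S, J ≤ P := by
  rw [rKdim_eq_lKdim_op] at hS hJ
  rw [rKdimQ_eq_lKdimQ_op] at hJ
  obtain ⟨P, ⟨hPprime, hP⟩, hJP⟩ := exists_mem_Lam'_le hS hJ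
  have hop : P.unop.op = P := TwoSidedIdeal.opOrderIso.apply_symm_apply P
  refine ⟨P.unop, ⟨IsPrimeT.of_op (hop ▸ hPprime), ?_⟩, fun x hx => ?_⟩
  · rwa [rKdimQ_eq_lKdimQ_op, hop, rKdim_eq_lKdim_op]
  · exact TwoSidedIdeal.mem_unop_iff.2 (hJP (TwoSidedIdeal.mem_op_iff.2 hx))

end Opposite

section Simple

variable {S : Type u} [Ring S]

theorem lKdim_eq_zero_iff_rKdim_eq_zero_of_isSimpleRing [IsSimpleRing S] [IsNoetherianRing S]
    [IsNoetherianRing Sᵐᵒᵖ] : lKdim S = 0 ↔ rKdim S = 0 := by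
  rw [rKdim_eq_lKdim_op, lKdim, lKdim, dev_eq_zero_iff, dev_eq_zero_iff]
  change IsArtinianRing S ↔ IsArtinianRing Sᵐᵒᵖ
  rw [← IsSimpleRing.isSemisimpleRing_iff_isArtinianRing,
    ← IsSimpleRing.isSemisimpleRing_iff_isArtinianRing, isSemisimpleRing_mulOpposite_iff]

theorem IsCoatom.isPrimeT {M : TwoSidedIdeal S} (hM : IsCoatom M) : IsPrimeT M := by
  refine ⟨fun htop => hM.1 (eq_top_iff.2 fun x _ => show x ∈ (M : Set S) from htop ▸ trivial),
    fun x y hxy => ?_⟩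
  by_contra! hxy'
  obtain ⟨X, Y, hMX, hMY, hXY⟩ := exists_lt_lt_mul_mem hxy hxy'.1 hxy'.2
  refine hM.1 (eq_top_iff.2 fun z _ => ?_)
  simpa using M.mul_mem_left z _ (hXY 1 (hM.2 X hMX ▸ trivial) 1 (hM.2 Y hMY ▸ trivial))

theorem IsCoatom.isSimpleRing_quotient {M : TwoSidedIdeal S} (hM : IsCoatom M) :
    IsSimpleRing M.ringCon.Quotient := by
  have : IsSimpleOrder (Set.Ici M.ringCon) := Set.isSimpleOrder_Ici_iff_isCoatom.2
    ((TwoSidedIdeal.orderIsoRingCon.isCoatom_iff M).2 hM)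
  exact ⟨(TwoSidedIdeal.orderIsoRingCon.trans RingCon.correspondence.symm).isSimpleOrder⟩

end Simple

theorem lKdim_eq_zero_iff_rKdim_eq_zero {R : Type u} [Ring R] [IsNoetherianRing R]
    [IsNoetherianRing Rᵐᵒᵖ] (h : Lam R = Lam' R) : lKdim R = 0 ↔ rKdim R = 0 := by
  rcases subsingleton_or_nontrivial R with _ | _
  · simp only [lKdim, rKdim, dev_eq_zero_of_subsingleton]
  obtain ⟨M, hM⟩ := IsCoatomic.exists_coatom (TwoSidedIdeal R)
  have := hM.isSimpleRing_quotient
  have := isNoetherianRing_of_surjective _ _ _ M.ringCon.mk'_surjective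
  have := isNoetherianRing_of_surjective _ _ _ (mk'_op_surjective M)
  have hMq : lKdimQ M = 0 ↔ rKdimQ M = 0 := lKdim_eq_zero_iff_rKdim_eq_zero_of_isSimpleRing
  constructor
  · intro h0
    have hMl : lKdimQ M = 0 := nonpos_iff_eq_zero.1 (h0 ▸ lKdimQ_le_lKdim M)
    have hM' : M ∈ Lam R := h ▸ ⟨hM.isPrimeT, hMl.trans h0.symm⟩
    exact hM'.2 ▸ hMq.1 hMl
  · intro h0
    have hMr : rKdimQ M = 0 := nonpos_iff_eq_zero.1 (h0 ▸ rKdimQ_le_rKdim M)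
    have hM' : M ∈ Lam' R := h.symm ▸ ⟨hM.isPrimeT, hMr.trans h0.symm⟩
    exact hM'.2 ▸ hMq.2 hMr

/-- If `Λ(R) = Λ'(R)` then for every two-sided ideal `J`,
`|R/J|_r < |R|_r ↔ |R/J|_l < |R|_l`. -/
theorem stmt8 (R : Type u) [Ring R] [IsNoetherianRing R] [IsNoetherianRing Rᵐᵒᵖ]
    (h : Lam R = Lam' R) (J : TwoSidedIdeal R) :
    rKdimQ J < rKdim R ↔ lKdimQ J < lKdim R := by
  have hzero := lKdim_eq_zero_iff_rKdim_eq_zero h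
  constructor
  · intro hlt
    refine (lKdimQ_le_lKdim J).lt_of_ne fun hJ => ?_
    have hl : lKdim R ≠ 0 := fun h0 => not_lt_zero (hzero.1 h0 ▸ hlt)
    obtain ⟨P, hP, hJP⟩ := exists_mem_Lam'_le hl hJ
    exact (rKdimQ_anti hJP).not_gt ((h ▸ hP : P ∈ Lam R).2 ▸ hlt)
  · intro hlt
    refine (rKdimQ_le_rKdim J).lt_of_ne fun hJ => ?_
    have hr : rKdim R ≠ 0 := fun h0 => not_lt_zero (hzero.2 h0 ▸ hlt)
    obtain ⟨P, hP, hJP⟩ := exists_mem_Lam_le hr hJ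
    exact (lKdimQ_anti hJP).not_gt ((h ▸ hP : P ∈ Lam' R).2 ▸ hlt)
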